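/- Let k be a field of characteristic ≠ 2. Then there exist integers i*, j* ≥ 1 such that m_{i*,j*}(k) = ∞ if and only if m_{i,j}(k) = ∞ for all integers i, j ≥ 1. -/

import Mathlib

/-!  Diagonal quadratic forms over a field of characteristic ≠ 2.
In characteristic ≠ 2 every regular quadratic form is isometric to a diagonal form
`⟨d 1, …, d n⟩`, so we model (regular) quadratic forms by their diagonal
coefficient functions. -/

/-- The diagonal quadratic form `⟨d i⟩_{i : ι}` over `k`. -/
noncomputable def diagQF (k : Type) [Field k] {ι : Type} [Fintype ι] (d : ι → k) :
    QuadraticForm k (ι → k) :=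
  QuadraticMap.weightedSumSquares k d

/-- Isometry of (diagonal) quadratic forms. -/
def FormIsom (k : Type) [Field k] {ι κ : Type} [Fintype ι] [Fintype κ]
    (d : ι → k) (e : κ → k) : Prop :=
  QuadraticMap.Equivalent (diagQF k d) (diagQF k e)

/-- The orthogonal sum of `m` copies of the hyperbolic plane `⟨1, -1⟩`. -/
def hypForm (k : Type) [Field k] (m : ℕ) : Fin (2 * m) → k :=
  fun j => if j.val % 2 = 0 then 1 else -1

/-- The Witt index of a (diagonal) form: the largest `m` such that the form is isometric
to `m·ℍ ⟂ (rest)` for some diagonal form `rest`. -/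
noncomputable def wittIndex (k : Type) [Field k] {ι : Type} [Fintype ι] (d : ι → k) : ℕ :=
  sSup {m : ℕ | ∃ (s : ℕ) (e : Fin s → k), FormIsom k d (Sum.elim (hypForm k m) e)}
/-- The u-invariant of a field: the supremum of the dimensions of anisotropic regular
quadratic forms over `k` (`⊤` if unbounded). -/
noncomputable def uInv (k : Type) [Field k] : ℕ∞ :=
  sSup {N : ℕ∞ | ∃ n : ℕ, N = n ∧
    ∃ d : Fin n → k, (∀ t, d t ≠ 0) ∧ (diagQF k d).Anisotropic}

/-- The refined m-invariant `m_{i,j}(k)`: the least dimension (`⊤` if there is none) of a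
regular quadratic form `q` of dimension ≥ 1 over `k` with `i_W(q) < j` such that
`i_W(q ⟂ σ) ≥ j` for every `i`-dimensional regular form `σ` over `k`. -/
noncomputable def mInv (k : Type) [Field k] (i j : ℕ) : ℕ∞ :=
  sInf {N : ℕ∞ | ∃ n : ℕ, N = n ∧ 1 ≤ n ∧
    ∃ d : Fin n → k, (∀ t, d t ≠ 0) ∧ wittIndex k d < j ∧
      ∀ σ : Fin i → k, (∀ t, σ t ≠ 0) → j ≤ wittIndex k (Sum.elim d σ)}

/-! A regular `q` with `i_W(q) < j ≤ i_W(q ⟂ σ)` for every regular `i`-dimensional `σ` exists iff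
some anisotropic `φ` becomes isotropic after adding any regular `i`-dimensional `σ`: take for `φ`
the anisotropic part of `q`, and conversely `q = φ ⟂ (j - 1)ℍ`. This rests on Witt decomposition
and Witt cancellation (proved with reflections), and shows that whether `m_{i,j}(k)` is finite
does not depend on `j`. Nor does it depend on `i`: a `φ` that works for `1` works for every `i`,
and a `φ` that works for `i + 1` either works for `1` already or else `φ ⟂ ⟨a⟩` is anisotropic for
some `a` and works for `i`. -/

namespace QuadraticMap

variable {k M M₁ M₂ : Type*} [Field k] [AddCommGroup M] [Module k M]
  [AddCommGroup M₁] [Module k M₁] [AddCommGroup M₂] [Module k M₂]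

theorem IsometryEquiv.polar_map {Q₁ : QuadraticForm k M₁} {Q₂ : QuadraticForm k M₂}
    (f : Q₁.IsometryEquiv Q₂) (x y : M₁) : polar Q₂ (f x) (f y) = polar Q₁ x y := by
  simp only [polar, ← map_add, f.map_app]

theorem Equivalent.anisotropic_iff {Q₁ : QuadraticForm k M₁} {Q₂ : QuadraticForm k M₂}
    (h : Q₁.Equivalent Q₂) : Q₁.Anisotropic ↔ Q₂.Anisotropic := by
  obtain ⟨f⟩ := h
  refine ⟨fun h₁ y hy => ?_, fun h₂ x hx => ?_⟩
  · have hx : Q₁ (f.symm y) = 0 := by rw [← f.map_app, f.apply_symm_apply, hy]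
    rw [← f.apply_symm_apply y, h₁ _ hx, map_zero]
  · exact (map_eq_zero_iff f (EquivLike.injective f)).1 (h₂ _ ((f.map_app x).trans hx))

variable (Q : QuadraticForm k M)

theorem map_add_eq (x y : M) : Q (x + y) = Q x + Q y + polar Q x y := by
  rw [polar]; ring

theorem map_sub_smul (x w : M) (t : k) :
    Q (x - t • w) = Q x - t * polar Q w x + t * t * Q w := by
  rw [sub_eq_add_neg, map_add_eq, polar_neg_right, polar_smul_right, QuadraticMap.map_neg,
    QuadraticMap.map_smul, polar_comm, smul_eq_mul, smul_eq_mul]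
  ring

theorem exists_apply_eq_of_polar_ne_zero {x y : M} (hx : Q x = 0) (hxy : polar Q x y ≠ 0)
    (a : k) : ∃ z, Q z = a := by
  refine ⟨((a - Q y) / polar Q x y) • x + y, ?_⟩
  rw [map_add_eq, QuadraticMap.map_smul, polar_smul_left, hx, smul_eq_mul, smul_eq_mul]
  field_simp
  ring

noncomputable def reflection {w : M} (hw : Q w ≠ 0) : Q.IsometryEquiv Q where
  toLinearEquiv := Module.reflection (x := w) (f := (Q w)⁻¹ • Q.polarBilin w) <| by
    rw [LinearMap.smul_apply, polarBilin_apply_apply, polar_self, smul_eq_mul, two_smul,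
      ← two_mul, mul_left_comm, inv_mul_cancel₀ hw, mul_one]
  map_app' x := by
    change Q (Module.reflection _ x) = Q x
    rw [Module.reflection_apply, LinearMap.smul_apply, polarBilin_apply_apply,
      smul_eq_mul, map_sub_smul]
    field_simp
    ring

theorem reflection_apply {w : M} (hw : Q w ≠ 0) (x : M) :
    Q.reflection hw x = x - (polar Q w x / Q w) • w := by
  rw [div_eq_inv_mul]; rfl

theorem polar_sq_prod_one {a : k} (Q₁ : QuadraticForm k M₁) (x : k × M₁) :
    polar ((a • sq : QuadraticForm k k).prod Q₁) x (1, 0) = 2 * a * x.1 := by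
  rw [polar_prod, polar_zero_right, add_zero]
  simp only [polar, smul_apply, sq_apply, smul_eq_mul]
  ring

variable [NeZero (2 : k)]

theorem exists_isometryEquiv_apply_eq {u v : M} (hu : Q u ≠ 0) (huv : Q v = Q u) :
    ∃ g : Q.IsometryEquiv Q, g v = u := by
  set p := polar Q u v
  have hadd : Q (u + v) = 2 * Q u + p := by rw [map_add_eq, huv]; ring
  have hsub : Q (u - v) = 2 * Q u - p := by
    rw [sub_eq_add_neg, map_add_eq, QuadraticMap.map_neg, polar_neg_right, huv]; ring
  by_cases h0 : Q (u - v) = 0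
  · -- reflecting in `u + v` sends `v` to `-u`, and reflecting in `u` then gives `u`
    have hp : p = 2 * Q u := by linear_combination hsub - h0
    have hadd0 : Q (u + v) ≠ 0 := by
      rw [hadd, hp, ← two_mul, ← mul_assoc]
      exact mul_ne_zero (mul_ne_zero two_ne_zero two_ne_zero) hu
    refine ⟨(Q.reflection hadd0).trans (Q.reflection hu), ?_⟩
    have hv : Q.reflection hadd0 v = -u := by
      have : polar Q (u + v) v / Q (u + v) = 1 := by
        rw [div_eq_one_iff_eq hadd0, polar_add_left, polar_self, huv, hadd, two_nsmul]; ring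
      rw [reflection_apply, this, one_smul]; abel
    change Q.reflection hu (Q.reflection hadd0 v) = u
    have : polar Q u (-u) / Q u = -2 := by
      rw [div_eq_iff hu, polar_neg_right, polar_self, two_nsmul]; ring
    rw [hv, reflection_apply, this]; module
  · refine ⟨Q.reflection h0, ?_⟩
    have : polar Q (u - v) v / Q (u - v) = -1 := by
      rw [div_eq_iff h0, polar_sub_left, polar_self, huv, hsub, two_nsmul]; ring
    rw [reflection_apply, this, neg_one_smul]; abel

theorem exists_equivalent_sq_prod_weightedSumSquares [FiniteDimensional k M] {v : M}
    (hv : Q v ≠ 0) : ∃ (n : ℕ) (w : Fin n → k),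
      Q.Equivalent ((Q v • sq : QuadraticForm k k).prod (weightedSumSquares k w)) := by
  have hv' : Q.polarBilin v v ≠ 0 := by
    rw [polarBilin_apply_apply, polar_self, two_nsmul, ← two_mul]
    exact mul_ne_zero two_ne_zero hv
  set N := LinearMap.BilinForm.orthogonal Q.polarBilin (k ∙ v)
  have hv0 : v ≠ 0 := fun h => hv (h ▸ QuadraticMap.map_zero Q)
  let e : (k × N) ≃ₗ[k] M := ((LinearEquiv.toSpanNonzeroSingleton k M v hv0).prodCongr
    (LinearEquiv.refl k N)).trans (Submodule.prodEquivOfIsCompl _ _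
      (LinearMap.BilinForm.isCompl_span_singleton_orthogonal hv'))
  have hsplit : ((Q v • sq : QuadraticForm k k).prod (Q.comp N.subtype)).Equivalent Q := by
    refine ⟨⟨e, fun x => ?_⟩⟩
    have hortho : polar Q (x.1 • v) x.2 = 0 := by
      rw [polar_smul_left, ← polarBilin_apply_apply,
        LinearMap.BilinForm.mem_orthogonal_iff.1 x.2.2 v (Submodule.mem_span_singleton_self v),
        smul_zero]
    change Q (x.1 • v + x.2) = _
    rw [map_add_eq, hortho, QuadraticMap.map_smul, prod_apply]
    simp only [smul_apply, sq_apply, comp_apply, Submodule.coe_subtype, smul_eq_mul]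
    ring
  let : Invertible (2 : k) := invertibleOfNonzero two_ne_zero
  obtain ⟨w, hw⟩ := QuadraticForm.equivalent_weightedSumSquares (Q.comp N.subtype)
  exact ⟨_, w, hsplit.symm.trans (Equivalent.prod (Equivalent.refl _) hw)⟩

section Cancellation

variable {a : k} {Q₁ : QuadraticForm k M₁} {Q₂ : QuadraticForm k M₂}

theorem IsometryEquiv.fst_apply_inr_eq_zero (ha : a ≠ 0)
    (L : ((a • sq : QuadraticForm k k).prod Q₁).IsometryEquiv ((a • sq).prod Q₂))
    (hL : L (1, 0) = (1, 0)) (x : M₁) : (L (0, x)).1 = 0 := by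
  have h := L.polar_map (0, x) (1, 0)
  rw [hL, polar_sq_prod_one, polar_sq_prod_one, mul_zero] at h
  simpa [ha, two_ne_zero] using h

/-- Move `f (1, 0)` back to `(1, 0)` by an isometry; the composite then preserves
`(1, 0)ᗮ = 0 × M₁`. -/
theorem Equivalent.of_sq_prod (ha : a ≠ 0)
    (h : ((a • sq : QuadraticForm k k).prod Q₁).Equivalent ((a • sq).prod Q₂)) :
    Q₁.Equivalent Q₂ := by
  obtain ⟨f⟩ := h
  obtain ⟨g, hg⟩ := exists_isometryEquiv_apply_eq ((a • sq : QuadraticForm k k).prod Q₂)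
    (u := (1, 0)) (v := f (1, 0)) (by simpa using ha) ((f.map_app _).trans (by simp))
  set L := f.trans g
  have hL : L (1, 0) = (1, 0) := hg
  have hL' : L.symm (1, 0) = (1, 0) := by rw [L.symm_apply_eq, hL]
  have hinr : ∀ x, L (0, x) = (0, (L (0, x)).2) := fun x =>
    Prod.ext (L.fst_apply_inr_eq_zero ha hL x) rfl
  have hinr' : ∀ y, L.symm (0, y) = (0, (L.symm (0, y)).2) := fun y =>
    Prod.ext (L.symm.fst_apply_inr_eq_zero ha hL' y) rfl
  let e : M₁ ≃ₗ[k] M₂ := LinearEquiv.ofLinearMap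
    (LinearMap.snd k k M₂ ∘ₗ L.toLinearEquiv.toLinearMap ∘ₗ LinearMap.inr k k M₁)
    (LinearMap.snd k k M₁ ∘ₗ L.symm.toLinearEquiv.toLinearMap ∘ₗ LinearMap.inr k k M₂)
    (by ext y; simp [← hinr']) (by ext x; simp [← hinr])
  refine ⟨⟨e, fun x => ?_⟩⟩
  have h := L.map_app (0, x)
  rw [hinr x] at h
  simpa [e] using h

end Cancellation

end QuadraticMap

section Diagonal

open QuadraticMap

variable {k : Type} [Field k] {ι κ ν ι' κ' : Type} [Fintype ι] [Fintype κ] [Fintype ν]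
  [Fintype ι'] [Fintype κ']

theorem diagQF_apply (d x : ι → k) : diagQF k d x = ∑ i, d i * (x i * x i) := by
  simp [diagQF, weightedSumSquares_apply, smul_eq_mul]

theorem diagQF_single [DecidableEq ι] (d : ι → k) (i : ι) :
    diagQF k d (Pi.single i 1) = d i := by
  rw [diagQF_apply, Finset.sum_eq_single i (fun j _ hj => by simp [hj]) (by simp)]
  simp

theorem polar_diagQF_single [DecidableEq ι] (d x : ι → k) (i : ι) :
    polar (diagQF k d) x (Pi.single i 1) = 2 * d i * x i := by
  rw [polar, diagQF_apply, diagQF_apply, diagQF_apply, ← Finset.sum_sub_distrib,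
    ← Finset.sum_sub_distrib, Finset.sum_eq_single i (fun j _ hj => by simp [hj]) (by simp)]
  simp only [Pi.add_apply, Pi.single_eq_same]
  ring

theorem ne_zero_of_anisotropic {d : ι → k} (h : (diagQF k d).Anisotropic) (i : ι) :
    d i ≠ 0 := by
  classical
  intro hi
  have := congrFun (h _ ((diagQF_single d i).trans hi)) i
  simp at this

theorem diagQF_sumElim_equivalent (d : ι → k) (e : κ → k) :
    (diagQF k (Sum.elim d e)).Equivalent ((diagQF k d).prod (diagQF k e)) :=
  ⟨⟨LinearEquiv.sumArrowLequivProdArrow ι κ k k, fun x => by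
    simp [diagQF_apply, Fintype.sum_sum_type]⟩⟩

theorem diagQF_sumElim_const_equivalent (a : k) (d : ι → k) :
    (diagQF k (Sum.elim (fun _ : Fin 1 => a) d)).Equivalent
      ((a • QuadraticMap.sq : QuadraticForm k k).prod (diagQF k d)) :=
  (diagQF_sumElim_equivalent _ d).trans <| Equivalent.prod
    ⟨⟨LinearEquiv.funUnique (Fin 1) k k, fun x => by simp [diagQF_apply]⟩⟩ (Equivalent.refl _)

namespace FormIsom

variable {d : ι → k} {e : κ → k} {f : ν → k} {d' : ι' → k} {e' : κ' → k}

theorem refl (d : ι → k) : FormIsom k d d := Equivalent.refl _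

theorem symm (h : FormIsom k d e) : FormIsom k e d := Equivalent.symm h

theorem trans (h : FormIsom k d e) (h' : FormIsom k e f) : FormIsom k d f :=
  Equivalent.trans h h'

theorem of_equiv (σ : ι ≃ κ) (h : ∀ i, d i = e (σ i)) : FormIsom k d e := by
  refine ⟨⟨LinearEquiv.funCongrLeft k k σ.symm, fun x => ?_⟩⟩
  rw [diagQF_apply, diagQF_apply]
  refine (Fintype.sum_equiv σ _ _ fun i => ?_).symm
  simp [h i, LinearEquiv.funCongrLeft_apply]

theorem card_eq (h : FormIsom k d e) : Fintype.card ι = Fintype.card κ := by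
  obtain ⟨f⟩ := h
  simpa using f.toLinearEquiv.finrank_eq

theorem anisotropic_iff (h : FormIsom k d e) :
    (diagQF k d).Anisotropic ↔ (diagQF k e).Anisotropic :=
  Equivalent.anisotropic_iff h

theorem sumElim (h₁ : FormIsom k d d') (h₂ : FormIsom k e e') :
    FormIsom k (Sum.elim d e) (Sum.elim d' e') :=
  (diagQF_sumElim_equivalent d e).trans <|
    (Equivalent.prod h₁ h₂).trans (diagQF_sumElim_equivalent d' e').symm

theorem sumElim_comm (d : ι → k) (e : κ → k) : FormIsom k (Sum.elim d e) (Sum.elim e d) :=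
  of_equiv (Equiv.sumComm ι κ) fun i => by rcases i with i | i <;> rfl

theorem sumElim_assoc (d : ι → k) (e : κ → k) (f : ν → k) :
    FormIsom k (Sum.elim (Sum.elim d e) f) (Sum.elim d (Sum.elim e f)) :=
  of_equiv (Equiv.sumAssoc ι κ ν) fun i => by rcases i with (i | i) | i <;> rfl

theorem sumElim_of_isEmpty [IsEmpty ι] (d : ι → k) (e : κ → k) :
    FormIsom k (Sum.elim d e) e :=
  of_equiv (Equiv.emptySum ι κ) fun i => by rcases i with i | i; exacts [isEmptyElim i, rfl]

theorem sumElim_init_last {n : ℕ} (c : Fin (n + 1) → k) (d : ι → k) :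
    FormIsom k (Sum.elim (Fin.init c) (Sum.elim (fun _ : Fin 1 => c (Fin.last n)) d))
      (Sum.elim c d) := by
  refine of_equiv ((Equiv.sumAssoc _ _ _).symm.trans
    (finSumFinEquiv.sumCongr (Equiv.refl ι))) fun i => ?_
  rcases i with i | (i | i)
  · rfl
  · rw [Subsingleton.elim i 0]; rfl
  · rfl

/-- All diagonal entries being nonzero means that the polar form is nondegenerate, which
isometries preserve. -/
theorem ne_zero [NeZero (2 : k)] (h : FormIsom k d e) (hd : ∀ i, d i ≠ 0) (j : κ) :
    e j ≠ 0 := by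
  classical
  intro hj
  obtain ⟨g⟩ := h
  have hx : ∀ i, g.symm (Pi.single j 1) i = 0 := fun i => by
    have := g.symm.polar_map (Pi.single j 1) (g (Pi.single i 1))
    rw [g.symm_apply_apply, polar_diagQF_single, polar_comm, polar_diagQF_single, hj] at this
    simpa [hd i, two_ne_zero] using this.symm
  have h0 : g.symm (Pi.single j 1) = 0 := funext hx
  simpa using congrArg g h0

end FormIsom

theorem exists_formIsom_fin (d : ι → k) : ∃ e : Fin (Fintype.card ι) → k, FormIsom k d e :=
  ⟨d ∘ (Fintype.equivFin ι).symm, FormIsom.of_equiv (Fintype.equivFin ι) fun i => by simp⟩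

theorem anisotropic_diagQF_comp {e : κ → k} (h : (diagQF k e).Anisotropic) {f : ι → κ}
    (hf : Function.Injective f) : (diagQF k (e ∘ f)).Anisotropic := by
  intro x hx
  have hy : diagQF k e (Function.extend f x 0) = 0 := by
    rw [← hx, diagQF_apply, diagQF_apply]
    refine (Fintype.sum_of_injective f hf _ _ (fun j hj => ?_) fun i => ?_).symm
    · simp [Function.extend_apply' _ _ _ (by simpa using hj)]
    · simp [hf.extend_apply]
  funext i
  simpa [hf.extend_apply] using congrFun (h _ hy) (f i)

theorem not_anisotropic_diagQF_of_add_eq_zero [DecidableEq ι] {d : ι → k} {i j : ι}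
    (hij : i ≠ j) (h : d i + d j = 0) : ¬ (diagQF k d).Anisotropic := by
  intro ha
  have hx : diagQF k d (Pi.single i 1 + Pi.single j 1) = 0 := by
    rw [map_add_eq, diagQF_single, diagQF_single, polar_diagQF_single,
      Pi.single_eq_of_ne hij.symm, mul_zero, add_zero, h]
  have := congrFun (ha _ hx) i
  simp [Pi.single_eq_of_ne hij] at this

theorem formIsom_hypForm_one : FormIsom k (hypForm k 1)
    (Sum.elim (fun _ : Fin 1 => (1 : k)) (fun _ : Fin 1 => -1)) :=
  FormIsom.symm <| FormIsom.of_equiv finSumFinEquiv fun i => by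
    rcases i with i | i <;> rw [Subsingleton.elim i 0] <;> rfl

variable [NeZero (2 : k)]

theorem FormIsom.of_sumElim_const {a : k} (ha : a ≠ 0) {d : ι → k} {e : κ → k}
    (h : FormIsom k (Sum.elim (fun _ : Fin 1 => a) d) (Sum.elim (fun _ : Fin 1 => a) e)) :
    FormIsom k d e :=
  Equivalent.of_sq_prod ha <| (diagQF_sumElim_const_equivalent a d).symm.trans <|
    Equivalent.trans h (diagQF_sumElim_const_equivalent a e)

theorem FormIsom.of_sumElim_left {n : ℕ} {c : Fin n → k} (hc : ∀ i, c i ≠ 0) {d : ι → k}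
    {e : κ → k} (h : FormIsom k (Sum.elim c d) (Sum.elim c e)) : FormIsom k d e := by
  induction n generalizing ι κ with
  | zero =>
    exact (FormIsom.sumElim_of_isEmpty c d).symm.trans
      (h.trans (FormIsom.sumElim_of_isEmpty c e))
  | succ n ih =>
    refine FormIsom.of_sumElim_const (hc (Fin.last n)) <| ih (c := Fin.init c) (fun _ => hc _) ?_
    exact (FormIsom.sumElim_init_last c d).trans <|
      h.trans (FormIsom.sumElim_init_last c e).symm

theorem exists_formIsom_sumElim_const (d : ι → k) {x : ι → k} (hx : diagQF k d x ≠ 0) :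
    ∃ (s : ℕ) (e : Fin s → k), FormIsom k d (Sum.elim (fun _ : Fin 1 => diagQF k d x) e) := by
  obtain ⟨s, w, hw⟩ := (diagQF k d).exists_equivalent_sq_prod_weightedSumSquares hx
  exact ⟨s, w, hw.trans (diagQF_sumElim_const_equivalent _ w).symm⟩

theorem exists_diagQF_apply_eq {d : ι → k} (hd : ∀ i, d i ≠ 0)
    (hiso : ¬ (diagQF k d).Anisotropic) (a : k) : ∃ x, diagQF k d x = a := by
  classical
  obtain ⟨x, hx0, hx⟩ := (not_anisotropic_iff_exists _).1 hiso
  obtain ⟨i, hi⟩ := Function.ne_iff.1 hx0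
  refine exists_apply_eq_of_polar_ne_zero _ hx (y := Pi.single i 1) ?_ a
  rw [polar_diagQF_single]
  exact mul_ne_zero (mul_ne_zero two_ne_zero (hd i)) hi

/-- For an isotropic vector `(z₀, y)`, either `z₀ ≠ 0` and `e (y / z₀) = -a`, or `y` is
isotropic for `e`, which is then universal. -/
theorem exists_diagQF_apply_eq_neg {a : k} {e : κ → k} (he : ∀ i, e i ≠ 0)
    (hiso : ¬ (diagQF k (Sum.elim (fun _ : Fin 1 => a) e)).Anisotropic) :
    ∃ y, diagQF k e y = -a := by
  obtain ⟨z, hz0, hz⟩ := (not_anisotropic_iff_exists _).1 hiso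
  have hsplit : a * (z (.inl 0) * z (.inl 0)) + diagQF k e (z ∘ Sum.inr) = 0 := by
    rw [← hz, diagQF_apply, diagQF_apply, Fintype.sum_sum_type, Fin.sum_univ_one]; rfl
  by_cases h0 : z (.inl 0) = 0
  · refine exists_diagQF_apply_eq he (fun hae => hz0 ?_) _
    have : z ∘ Sum.inr = 0 := hae _ (by simpa [h0] using hsplit)
    funext i
    rcases i with i | i
    · rwa [Subsingleton.elim i 0]
    · exact congrFun this i
  · refine ⟨(z (.inl 0))⁻¹ • (z ∘ Sum.inr), ?_⟩
    rw [QuadraticMap.map_smul, smul_eq_mul]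
    field_simp
    linear_combination hsplit

end Diagonal

section Witt

open QuadraticMap

variable {k : Type} [Field k] {ι κ : Type} [Fintype ι] [Fintype κ]

theorem FormIsom.hypForm_add {m n : ℕ} (e : κ → k) :
    FormIsom k (Sum.elim (hypForm k m) (Sum.elim (hypForm k n) e))
      (Sum.elim (hypForm k (m + n)) e) := by
  refine (FormIsom.sumElim_assoc _ _ e).symm.trans (FormIsom.sumElim ?_ (FormIsom.refl e))
  refine FormIsom.of_equiv (finSumFinEquiv.trans (finCongr (mul_add 2 m n).symm)) fun i => ?_
  rcases i with i | i <;> simp [hypForm, Nat.add_mod]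

theorem hypForm_ne_zero (m : ℕ) (i : Fin (2 * m)) : hypForm k m i ≠ 0 := by
  unfold hypForm; split_ifs <;> simp

theorem not_anisotropic_hypForm_sumElim {m : ℕ} (hm : 1 ≤ m) (e : κ → k) :
    ¬ (diagQF k (Sum.elim (hypForm k m) e)).Anisotropic := by
  classical
  refine not_anisotropic_diagQF_of_add_eq_zero (i := .inl ⟨0, by omega⟩)
    (j := .inl ⟨1, by omega⟩) (by simp) ?_
  simp [hypForm]

theorem bddAbove_wittIndex_set (d : ι → k) :
    BddAbove {m : ℕ | ∃ (s : ℕ) (e : Fin s → k), FormIsom k d (Sum.elim (hypForm k m) e)} := by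
  refine ⟨Fintype.card ι, fun m ⟨s, e, h⟩ => ?_⟩
  have := h.card_eq
  simp only [Fintype.card_sum, Fintype.card_fin] at this
  omega

theorem le_wittIndex {d : ι → k} {m : ℕ} {e : κ → k}
    (h : FormIsom k d (Sum.elim (hypForm k m) e)) : m ≤ wittIndex k d := by
  obtain ⟨e', he'⟩ := exists_formIsom_fin e
  exact le_csSup (bddAbove_wittIndex_set d)
    ⟨_, e', h.trans (FormIsom.sumElim (FormIsom.refl _) he')⟩

theorem exists_formIsom_wittIndex (d : ι → k) :
    ∃ (s : ℕ) (e : Fin s → k), FormIsom k d (Sum.elim (hypForm k (wittIndex k d)) e) := by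
  refine Nat.sSup_mem ?_ (bddAbove_wittIndex_set d)
  obtain ⟨e, he⟩ := exists_formIsom_fin d
  have : IsEmpty (Fin (2 * 0)) := Fin.isEmpty'
  exact ⟨0, _, e, he.trans (FormIsom.sumElim_of_isEmpty (hypForm k 0) e).symm⟩

variable [NeZero (2 : k)]

theorem wittIndex_le_of_anisotropic {d : ι → k} {w : ℕ} {u : κ → k}
    (h : FormIsom k d (Sum.elim (hypForm k w) u)) (hu : (diagQF k u).Anisotropic) :
    wittIndex k d ≤ w := by
  obtain ⟨s, e, he⟩ := exists_formIsom_wittIndex d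
  by_contra! hlt
  obtain ⟨n, hn⟩ := Nat.exists_eq_add_of_lt hlt
  rw [hn, add_assoc] at he
  have hcancel : FormIsom k u (Sum.elim (hypForm k (n + 1)) e) :=
    FormIsom.of_sumElim_left (hypForm_ne_zero w)
      (h.symm.trans (he.trans (FormIsom.hypForm_add e).symm))
  exact not_anisotropic_hypForm_sumElim (by omega) e (hcancel.anisotropic_iff.1 hu)

theorem exists_formIsom_hypForm_one_sumElim {d : ι → k} (hd : ∀ i, d i ≠ 0)
    (hiso : ¬ (diagQF k d).Anisotropic) :
    ∃ (s : ℕ) (e : Fin s → k), FormIsom k d (Sum.elim (hypForm k 1) e) := by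
  obtain ⟨x, hx⟩ := exists_diagQF_apply_eq hd hiso 1
  obtain ⟨s, e, he⟩ := exists_formIsom_sumElim_const d (x := x) (hx ▸ one_ne_zero)
  rw [hx] at he
  obtain ⟨y, hy⟩ := exists_diagQF_apply_eq_neg (e := e) (fun i => he.ne_zero hd (.inr i))
    fun h => hiso (he.anisotropic_iff.2 h)
  obtain ⟨s', e', he'⟩ :=
    exists_formIsom_sumElim_const e (x := y) (hy ▸ neg_ne_zero.2 one_ne_zero)
  rw [hy] at he'
  exact ⟨s', e', he.trans <| (FormIsom.sumElim (.refl _) he').trans <|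
    (FormIsom.sumElim_assoc _ _ _).symm.trans <|
      FormIsom.sumElim formIsom_hypForm_one.symm (.refl _)⟩

theorem exists_anisotropic_formIsom_wittIndex {d : ι → k} (hd : ∀ i, d i ≠ 0) :
    ∃ (s : ℕ) (u : Fin s → k), (diagQF k u).Anisotropic ∧
      FormIsom k d (Sum.elim (hypForm k (wittIndex k d)) u) := by
  obtain ⟨s, u, hu⟩ := exists_formIsom_wittIndex d
  refine ⟨s, u, by_contra fun hiso => ?_, hu⟩
  obtain ⟨s', e, he⟩ :=
    exists_formIsom_hypForm_one_sumElim (fun i => hu.ne_zero hd (.inr i)) hiso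
  have := le_wittIndex <| hu.trans <|
    (FormIsom.sumElim (.refl _) he).trans (FormIsom.hypForm_add e)
  omega

end Witt

def IsotropizedBy (k : Type) [Field k] (i : ℕ) {ι : Type} [Fintype ι] (φ : ι → k) : Prop :=
  ∀ σ : Fin i → k, (∀ t, σ t ≠ 0) → ¬ (diagQF k (Sum.elim φ σ)).Anisotropic

/-- `mInv k i j` is the least dimension of such a form. -/
def IsWittRaising (k : Type) [Field k] (i j : ℕ) {ι : Type} [Fintype ι] (d : ι → k) : Prop :=
  (∀ t, d t ≠ 0) ∧ wittIndex k d < j ∧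
    ∀ σ : Fin i → k, (∀ t, σ t ≠ 0) → j ≤ wittIndex k (Sum.elim d σ)

section MInvariant

variable {k : Type} [Field k] {ι κ : Type} [Fintype ι] [Fintype κ] {i j : ℕ}

theorem mInv_ne_top_iff :
    mInv k i j ≠ ⊤ ↔ ∃ n, 1 ≤ n ∧ ∃ d : Fin n → k, IsWittRaising k i j d := by
  simp only [mInv, ne_eq, sInf_eq_top, not_forall]
  constructor
  · rintro ⟨_, ⟨n, rfl, hn, d, hd⟩, -⟩
    exact ⟨n, hn, d, hd⟩
  · rintro ⟨n, hn, d, hd⟩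
    exact ⟨n, ⟨n, rfl, hn, d, hd⟩, ENat.natCast_ne_top n⟩

namespace IsotropizedBy

variable {φ : ι → k}

theorem of_formIsom {ψ : κ → k} (h : IsotropizedBy k i φ) (hφψ : FormIsom k φ ψ) :
    IsotropizedBy k i ψ := fun σ hσ hA =>
  h σ hσ (((hφψ.sumElim (.refl σ)).anisotropic_iff).2 hA)

theorem mono (h : IsotropizedBy k i φ) {i' : ℕ} (hii' : i ≤ i') : IsotropizedBy k i' φ := by
  intro σ hσ hA
  refine h (σ ∘ Fin.castLE hii') (fun t => hσ _) ?_
  have := anisotropic_diagQF_comp hA (f := Sum.map id (Fin.castLE hii'))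
    (Sum.map_injective.2 ⟨Function.injective_id, Fin.castLE_injective hii'⟩)
  convert this using 2
  funext x
  rcases x with x | x <;> rfl

theorem of_isEmpty [IsEmpty ι] (h : IsotropizedBy k i φ) (ψ : κ → k) : IsotropizedBy k i ψ :=
  fun σ hσ hA => h σ hσ <| (FormIsom.sumElim_of_isEmpty φ σ).anisotropic_iff.2 <|
    anisotropic_diagQF_comp hA Sum.inr_injective

theorem exists_fin (hφ : (diagQF k φ).Anisotropic) (h : IsotropizedBy k i φ) :
    ∃ (s : ℕ) (ψ : Fin s → k), (diagQF k ψ).Anisotropic ∧ IsotropizedBy k i ψ := by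
  obtain ⟨ψ, hψ⟩ := exists_formIsom_fin φ
  exact ⟨_, ψ, hψ.anisotropic_iff.1 hφ, h.of_formIsom hψ⟩

end IsotropizedBy

theorem exists_isotropizedBy_of_succ {φ : ι → k} (hφ : (diagQF k φ).Anisotropic)
    (h : IsotropizedBy k (i + 1) φ) (hi : 1 ≤ i) :
    ∃ (s : ℕ) (ψ : Fin s → k), (diagQF k ψ).Anisotropic ∧ IsotropizedBy k i ψ := by
  by_cases h₁ : IsotropizedBy k 1 φ
  · exact (h₁.mono hi).exists_fin hφ
  -- otherwise some `φ ⟂ ⟨a⟩` is still anisotropic, and `i` more dimensions isotropize it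
  obtain ⟨a, ha, hφa⟩ : ∃ a : Fin 1 → k, (∀ t, a t ≠ 0) ∧
      (diagQF k (Sum.elim φ a)).Anisotropic := by
    simpa [IsotropizedBy] using h₁
  refine IsotropizedBy.exists_fin hφa fun σ hσ hA => h (Sum.elim σ a ∘ finSumFinEquiv.symm)
    (fun t => ?_) ?_
  · obtain ⟨t, rfl⟩ := finSumFinEquiv.surjective t
    rcases t with t | t <;> simp [hσ, ha]
  · refine (FormIsom.sumElim_assoc φ a σ).trans (FormIsom.sumElim (.refl φ) ?_)
      |>.anisotropic_iff.1 hA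
    exact (FormIsom.sumElim_comm a σ).trans (FormIsom.of_equiv finSumFinEquiv fun t => by simp)

theorem exists_isotropizedBy_iff_one (hi : 1 ≤ i) :
    (∃ (s : ℕ) (φ : Fin s → k), (diagQF k φ).Anisotropic ∧ IsotropizedBy k i φ) ↔
      ∃ (s : ℕ) (φ : Fin s → k), (diagQF k φ).Anisotropic ∧ IsotropizedBy k 1 φ := by
  refine ⟨fun h => ?_, fun ⟨s, φ, hφ, h⟩ => ⟨s, φ, hφ, h.mono hi⟩⟩
  induction i, hi using Nat.le_induction with
  | base => exact h
  | succ i hi ih =>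
    obtain ⟨s, φ, hφ, h⟩ := h
    exact ih (exists_isotropizedBy_of_succ hφ h hi)

variable [NeZero (2 : k)]

theorem IsWittRaising.exists_isotropizedBy {d : ι → k} (h : IsWittRaising k i j d) :
    ∃ (s : ℕ) (u : Fin s → k), (diagQF k u).Anisotropic ∧ IsotropizedBy k i u := by
  obtain ⟨hd, hlt, hraise⟩ := h
  obtain ⟨s, u, hu, hdu⟩ := exists_anisotropic_formIsom_wittIndex hd
  refine ⟨s, u, hu, fun σ hσ hA => ?_⟩
  have := wittIndex_le_of_anisotropic
    ((hdu.sumElim (.refl σ)).trans (FormIsom.sumElim_assoc _ _ _)) hA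
  have := hraise σ hσ
  omega

theorem IsotropizedBy.exists_isWittRaising {s : ℕ} {φ : Fin (s + 1) → k}
    (hφ : (diagQF k φ).Anisotropic) (h : IsotropizedBy k i φ) (hj : 1 ≤ j) :
    ∃ n, 1 ≤ n ∧ ∃ d : Fin n → k, IsWittRaising k i j d := by
  set d := Sum.elim φ (hypForm k (j - 1)) ∘ finSumFinEquiv.symm
  have hd : FormIsom k d (Sum.elim (hypForm k (j - 1)) φ) :=
    (FormIsom.of_equiv finSumFinEquiv.symm fun _ => rfl).trans (FormIsom.sumElim_comm _ _)
  have hreg : ∀ t, Sum.elim (hypForm k (j - 1)) φ t ≠ 0 := by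
    rintro (t | t)
    exacts [hypForm_ne_zero _ t, ne_zero_of_anisotropic hφ t]
  refine ⟨_, by omega, d, fun t => hd.symm.ne_zero hreg t, by
    have := wittIndex_le_of_anisotropic hd hφ; omega, fun σ hσ => ?_⟩
  have hφσ : ∀ t, Sum.elim φ σ t ≠ 0 := by
    rintro (t | t)
    exacts [ne_zero_of_anisotropic hφ t, hσ t]
  obtain ⟨_, e, he⟩ := exists_formIsom_hypForm_one_sumElim hφσ (h σ hσ)
  have := le_wittIndex <| (hd.sumElim (.refl σ)).trans <| (FormIsom.sumElim_assoc _ _ _).trans <|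
    (FormIsom.sumElim (.refl _) he).trans (FormIsom.hypForm_add e)
  omega

theorem mInv_ne_top_iff_exists_isotropizedBy (hj : 1 ≤ j) :
    mInv k i j ≠ ⊤ ↔
      ∃ (s : ℕ) (φ : Fin s → k), (diagQF k φ).Anisotropic ∧ IsotropizedBy k i φ := by
  rw [mInv_ne_top_iff]
  refine ⟨fun ⟨_, _, d, hd⟩ => hd.exists_isotropizedBy, fun ⟨s, φ, hφ, h⟩ => ?_⟩
  cases s with
  | succ s => exact h.exists_isWittRaising hφ hj
  | zero =>
    -- a witness must be nonempty, so the empty `φ` is replaced by `⟨1⟩`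
    refine (h.of_isEmpty (fun _ : Fin 1 => (1 : k))).exists_isWittRaising (fun x hx => ?_) hj
    rw [diagQF_apply, Fin.sum_univ_one, one_mul, mul_self_eq_zero] at hx
    exact funext fun t => by fin_cases t; exact hx

end MInvariant

/-- **Proposition (all-or-nothing for infinite refined m-invariants).**  Let `k` be a
field of characteristic ≠ 2.  Then there are integers `i*, j* ≥ 1` with
`m_{i*,j*}(k) = ∞` if and only if `m_{i,j}(k) = ∞` for all integers `i, j ≥ 1`. -/
theorem statement17 (k : Type) [Field k] (hchar : ringChar k ≠ 2) :
    (∃ istar jstar : ℕ, 1 ≤ istar ∧ 1 ≤ jstar ∧ mInv k istar jstar = ⊤) ↔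
      (∀ i j : ℕ, 1 ≤ i → 1 ≤ j → mInv k i j = ⊤) := by
  have : NeZero (2 : k) := ⟨Ring.two_ne_zero hchar⟩
  refine ⟨fun ⟨i₀, j₀, hi₀, hj₀, htop⟩ i j hi hj => ?_,
    fun h => ⟨1, 1, le_rfl, le_rfl, h 1 1 le_rfl le_rfl⟩⟩
  by_contra hne
  rw [← ne_eq, mInv_ne_top_iff_exists_isotropizedBy hj, exists_isotropizedBy_iff_one hi,
    ← exists_isotropizedBy_iff_one hi₀, ← mInv_ne_top_iff_exists_isotropizedBy hj₀] at hne
  exact hne htop
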